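/- Over a field of characteristic p > 2, every irreducible representation of sl2 has dimension at most p. -/

import Mathlib

/-!
The `p`-th powers of `e` and `f` act on `V` by scalars: `ad e` and `ad f` are nilpotent of order
`3 ≤ p`, so in characteristic `p` the operators `e^p` and `f^p` commute with the action, and
Schur's lemma applies. If `f^p = b ≠ 0`, take a common eigenvector `m` of the commuting operators
`h` and `fe`; then `e m = b⁻¹ f^(p-1) (f e m)` is a multiple of `f^(p-1) m`, so
`m, f m, …, f^(p-1) m` span a submodule. If `f^p = 0`, some `h`-eigenvector `m` is killed by `f`,
and `m, e m, …, e^(p-1) m` span a submodule by the same argument for the triple `(-h, f, e)`.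
By irreducibility this submodule is all of `V`.
-/

open LieAlgebra.SpecialLinear

open LieModule LieAlgebra Module

lemma LieModule.toEnd_pow_char_lie {R L M : Type*} [CommRing R] [LieRing L] [LieAlgebra R L]
    [AddCommGroup M] [Module R M] [LieRingModule L M] [LieModule R L M] {p : ℕ} [CharP R p]
    (hp : p.Prime) {x : L} (hx : ad R L x ^ p = 0) (y : L) (m : M) :
    (toEnd R L M x ^ p) ⁅y, m⁆ = ⁅y, (toEnd R L M x ^ p) m⁆ := by
  rw [toEnd_pow_lie, Finset.sum_eq_single (0, p) _ (by simp)]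
  · simp
  rintro ⟨i, j⟩ hij hne
  rw [Finset.HasAntidiagonal.mem_antidiagonal] at hij
  dsimp only
  obtain rfl | hj := eq_or_ne j 0
  · obtain rfl : i = p := by simpa using hij
    simp [hx]
  -- the middle binomial coefficients vanish in characteristic `p`
  have hp_dvd : p ∣ p.choose i := hp.dvd_choose_self (by rintro rfl; simp_all) (by omega)
  rw [← Nat.cast_smul_eq_nsmul R, (CharP.cast_eq_zero_iff R p _).mpr hp_dvd, zero_smul]

lemma Submodule.span_insert_neg {R M : Type*} [Ring R] [AddCommGroup M] [Module R M] (x : M)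
    (s : Set M) : span R (insert (-x) s) = span R (insert x s) := by
  rw [span_insert, span_insert, ← Set.neg_singleton, span_neg]

lemma Module.End.exists_common_eigenvector {K V : Type*} [Field K] [IsAlgClosed K]
    [AddCommGroup V] [Module K V] [FiniteDimensional K V] [Nontrivial V] {φ ψ : Module.End K V}
    (hφψ : Commute φ ψ) : ∃ v ≠ 0, ∃ a b : K, φ v = a • v ∧ ψ v = b • v := by
  obtain ⟨a, ha⟩ := φ.exists_eigenvalue
  have hmaps : ∀ v ∈ φ.eigenspace a, ψ v ∈ φ.eigenspace a :=
    fun v hv ↦ Module.End.mapsTo_genEigenspace_of_comm hφψ a 1 hv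
  have : Nontrivial (φ.eigenspace a) := Submodule.nontrivial_iff_ne_bot.mpr ha
  obtain ⟨b, hb⟩ := Module.End.exists_eigenvalue (ψ.restrict hmaps)
  obtain ⟨w, hw⟩ := hb.exists_hasEigenvector
  refine ⟨w, fun h ↦ hw.2 (Subtype.ext h), a, b, Module.End.mem_eigenspace_iff.mp w.2, ?_⟩
  exact Module.End.mem_eigenspace_iff.mp
    (ψ.eigenspace_restrict_le_eigenspace hmaps b ⟨w, hw.1, rfl⟩)

section Irreducible

variable {L V : Type*} [LieRing L] [AddCommGroup V] [LieRingModule L V]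

lemma LieModule.submodule_eq_top_of_lie_mem {R : Type*} [CommRing R] [LieAlgebra R L]
    [Module R V] [LieModule R L V] [IsIrreducible R L V] {S : Set L}
    (hS : Submodule.span R S = ⊤) {N : Submodule R V} (hN : N ≠ ⊥)
    (hSN : ∀ x ∈ S, ∀ v ∈ N, ⁅x, v⁆ ∈ N) : N = ⊤ := by
  have hLN (x : L) : ∀ v ∈ N, ⁅x, v⁆ ∈ N := by
    induction (hS ▸ Submodule.mem_top : x ∈ Submodule.span R S) using Submodule.span_induction with
    | mem x hx => exact hSN x hx
    | zero => simp
    | add x y _ _ hx hy =>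
      exact fun v hv ↦ by simpa only [add_lie] using N.add_mem (hx v hv) (hy v hv)
    | smul c x _ hx => exact fun v hv ↦ by simpa only [smul_lie] using N.smul_mem c (hx v hv)
  let N' : LieSubmodule R L V := { N with lie_mem := hLN _ _ }
  have : Nontrivial N' := Submodule.nontrivial_iff_ne_bot.mpr hN
  exact congrArg LieSubmodule.toSubmodule (LieSubmodule.eq_top_of_isIrreducible R L V N')

lemma LieModule.exists_eq_smul_one_of_lie_comm {k : Type*} [Field k] [IsAlgClosed k]
    [LieAlgebra k L] [Module k V] [LieModule k L V] [FiniteDimensional k V] [IsIrreducible k L V]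
    (φ : Module.End k V) (hφ : ∀ (x : L) (v : V), φ ⁅x, v⁆ = ⁅x, φ v⁆) :
    ∃ c : k, φ = c • 1 := by
  have : Nontrivial V := nontrivial_of_isIrreducible k L V
  obtain ⟨c, hc⟩ := φ.exists_eigenvalue
  refine ⟨c, LinearMap.ext fun v ↦ ?_⟩
  let W : LieSubmodule k L V :=
    { toSubmodule := φ.eigenspace c
      lie_mem := fun {x m} hm ↦ by
        have hm : φ m = c • m := Module.End.mem_eigenspace_iff.mp hm
        exact Module.End.mem_eigenspace_iff.mpr (by rw [hφ, hm, lie_smul]) }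
  have : Nontrivial W := Submodule.nontrivial_iff_ne_bot.mpr hc
  have hv : v ∈ W := LieSubmodule.eq_top_of_isIrreducible k L V W ▸ LieSubmodule.mem_top v
  exact Module.End.mem_eigenspace_iff.mp hv

end Irreducible

namespace IsSl2Triple

section CommRing

variable {R L M : Type*} [CommRing R] [LieRing L] [LieAlgebra R L]
  [AddCommGroup M] [Module R M] [LieRingModule L M] [LieModule R L M]
  {h e f : L} (t : IsSl2Triple h e f) {m : M} {μ : R}
include t

local notation "ψ " n => ((toEnd R L M f) ^ n) m

lemma lie_h_pow_toEnd_f (hm : ⁅h, m⁆ = μ • m) (n : ℕ) :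
    ⁅h, ψ n⁆ = (μ - 2 * n) • ψ n := by
  have := t.symm.lie_h_pow_toEnd_e (m := m) (μ := -μ) (by rw [neg_lie, hm, neg_smul]) n
  rw [neg_lie, neg_eq_iff_eq_neg, ← neg_smul] at this
  rw [this]
  congr 1
  ring

lemma lie_e_pow_succ_toEnd_f (hm : ⁅h, m⁆ = μ • m) (n : ℕ) :
    ⁅e, ψ (n + 1)⁆ = (toEnd R L M f ^ (n + 1)) ⁅e, m⁆ + ((n + 1) * (μ - n)) • ψ n := by
  induction n with
  | zero =>
    simp only [pow_one, toEnd_apply_apply, Nat.cast_zero, sub_zero, zero_add, one_mul,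
      pow_zero, Module.End.one_apply]
    rw [leibniz_lie e, t.lie_e_f, hm, add_comm]
  | succ n ih =>
    rw [pow_succ' _ (n + 1), Module.End.mul_apply, toEnd_apply_apply, leibniz_lie e, t.lie_e_f,
      t.lie_h_pow_toEnd_f hm, ih, lie_add, lie_smul, ← toEnd_apply_apply R L M f,
      ← toEnd_apply_apply R L M f, ← Module.End.mul_apply, ← Module.End.mul_apply, ← pow_succ',
      ← pow_succ', add_left_comm, ← add_smul]
    congr 2
    push_cast
    ring

variable (R M) in
lemma commute_toEnd_h_f_mul_e :
    Commute (toEnd R L M h) (toEnd R L M f * toEnd R L M e) := by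
  ext v
  simp only [Module.End.mul_apply, toEnd_apply_apply]
  simp only [leibniz_lie h, t.lie_h_e_nsmul, t.lie_h_f_nsmul, neg_lie, nsmul_lie, lie_nsmul,
    lie_add]
  abel

omit t in
lemma ad_e_pow_three (t : IsSl2Triple h e f) (hspan : Submodule.span R {h, e, f} = ⊤) :
    ad R L e ^ 3 = 0 := by
  have hEH : ⁅e, h⁆ = -(2 • e) := by rw [← lie_skew, t.lie_h_e_nsmul]
  refine LinearMap.ext_on hspan ?_
  rintro _ (rfl | rfl | rfl) <;> simp [pow_succ, hEH, t.lie_e_f]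

end CommRing

variable {k L V : Type*} [Field k] [LieRing L] [LieAlgebra k L]
  [AddCommGroup V] [Module k V] [LieRingModule L V] [LieModule k L V] {h e f : L}

lemma exists_hasPrimitiveVectorWith_of_isNilpotent [IsAlgClosed k] [FiniteDimensional k V]
    [Nontrivial V] (t : IsSl2Triple h e f) (he : IsNilpotent (toEnd k L V e)) :
    ∃ (μ : k) (m : V), t.HasPrimitiveVectorWith m μ := by
  obtain ⟨μ, hμ⟩ := (toEnd k L V h).exists_eigenvalue
  obtain ⟨m, hm⟩ := hμ.exists_hasEigenvector
  obtain ⟨n, hn_ne, hn_zero⟩ := Nat.exists_not_and_succ_of_not_zero_of_exists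
    (p := fun n ↦ (toEnd k L V e ^ n) m = 0) (by simpa using hm.2)
    (he.imp fun N hN ↦ by simp [hN])
  exact ⟨μ + 2 * n, _,
    { ne_zero := hn_ne
      lie_h := t.lie_h_pow_toEnd_e hm.apply_eq_smul n
      lie_e := by rwa [lie_e_pow_toEnd_e] }⟩

lemma finrank_le_of_pow_toEnd_f_succ_eq_smul [IsIrreducible k L V] (t : IsSl2Triple h e f)
    (hspan : Submodule.span k {h, e, f} = ⊤) {m : V} (hm : m ≠ 0) {μ b c : k} {n : ℕ}
    (hh : ⁅h, m⁆ = μ • m) (hf : (toEnd k L V f ^ (n + 1)) m = b • m)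
    (he : ⁅e, m⁆ = c • (toEnd k L V f ^ n) m) :
    finrank k V ≤ n + 1 := by
  set F := toEnd k L V f
  set N := Submodule.span k (Set.range fun i : Fin (n + 1) ↦ (F ^ (i : ℕ)) m)
  have mem (i : ℕ) (hi : i ≤ n) : (F ^ i) m ∈ N := Submodule.subset_span ⟨⟨i, by omega⟩, rfl⟩
  have lie_mem : ∀ x ∈ ({h, e, f} : Set L), ∀ i ≤ n, ⁅x, (F ^ i) m⁆ ∈ N := by
    rintro _ (rfl | rfl | rfl) i hi
    · rw [t.lie_h_pow_toEnd_f hh]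
      exact N.smul_mem _ (mem i hi)
    · cases i with
      | zero =>
        rw [pow_zero, Module.End.one_apply, he]
        exact N.smul_mem _ (mem n le_rfl)
      | succ j =>
        rw [t.lie_e_pow_succ_toEnd_f hh, he, map_smul, ← Module.End.mul_apply, ← pow_add,
          show j + 1 + n = j + (n + 1) by omega, pow_add, Module.End.mul_apply, hf, map_smul]
        exact N.add_mem (N.smul_mem _ (N.smul_mem _ (mem j (by omega))))
          (N.smul_mem _ (mem j (by omega)))
    · rw [← toEnd_apply_apply k L V, ← Module.End.mul_apply, ← pow_succ']
      rcases hi.lt_or_eq with hi | rfl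
      · exact mem (i + 1) hi
      · rw [hf]
        exact N.smul_mem _ (mem 0 (Nat.zero_le i))
  have hN : N = ⊤ := by
    refine submodule_eq_top_of_lie_mem hspan ((Submodule.ne_bot_iff N).mpr ⟨m, ?_, hm⟩) ?_
    · simpa using mem 0 (Nat.zero_le n)
    · intro x hx v hv
      refine (Submodule.span_le (p := N.comap (toEnd k L V x))).mpr ?_ hv
      exact Set.range_subset_iff.mpr fun i ↦ lie_mem x hx i (by omega)
  calc finrank k V = finrank k N := by rw [hN, finrank_top]
    _ ≤ n + 1 := (finrank_range_le_card _).trans (by simp)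

variable [IsAlgClosed k] [FiniteDimensional k V] [IsIrreducible k L V] {p : ℕ} [CharP k p]

lemma exists_toEnd_e_pow_char_eq_smul (hp : p.Prime) (hp2 : 2 < p) (t : IsSl2Triple h e f)
    (hspan : Submodule.span k {h, e, f} = ⊤) : ∃ a : k, toEnd k L V e ^ p = a • 1 :=
  exists_eq_smul_one_of_lie_comm _
    (toEnd_pow_char_lie hp (pow_eq_zero_of_le hp2 (t.ad_e_pow_three hspan)))

theorem finrank_le_char (hp : p.Prime) (hp2 : 2 < p) (t : IsSl2Triple h e f)
    (hspan : Submodule.span k {h, e, f} = ⊤) : finrank k V ≤ p := by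
  have : Nontrivial V := nontrivial_of_isIrreducible k L V
  have hspan' : Submodule.span k {-h, f, e} = ⊤ := by
    rwa [Submodule.span_insert_neg, Set.pair_comm]
  obtain ⟨a, ha⟩ := t.exists_toEnd_e_pow_char_eq_smul (V := V) hp hp2 hspan
  obtain ⟨b, hb⟩ := t.symm.exists_toEnd_e_pow_char_eq_smul (V := V) hp hp2 hspan'
  obtain ⟨n, rfl⟩ : ∃ n, p = n + 1 := Nat.exists_eq_add_one.mpr hp.pos
  by_cases hb0 : b = 0
  · obtain ⟨μ, m, hm⟩ := t.symm.exists_hasPrimitiveVectorWith_of_isNilpotent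
      ⟨n + 1, by rw [hb, hb0, zero_smul]⟩
    refine t.symm.finrank_le_of_pow_toEnd_f_succ_eq_smul hspan' hm.ne_zero hm.lie_h
      (by rw [ha, LinearMap.smul_apply, Module.End.one_apply]) (c := 0) ?_
    rw [hm.lie_e, zero_smul]
  · obtain ⟨m, hm, μ, θ, hmh, hmfe⟩ :=
      Module.End.exists_common_eigenvector (t.commute_toEnd_h_f_mul_e k V)
    have hbe : b • ⁅e, m⁆ = θ • (toEnd k L V f ^ n) m := by
      calc b • ⁅e, m⁆ = (toEnd k L V f ^ (n + 1)) ⁅e, m⁆ := by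
            rw [hb, LinearMap.smul_apply, Module.End.one_apply]
        _ = (toEnd k L V f ^ n) ((toEnd k L V f * toEnd k L V e) m) := by rw [pow_succ]; rfl
        _ = θ • (toEnd k L V f ^ n) m := by rw [hmfe, map_smul]
    refine t.finrank_le_of_pow_toEnd_f_succ_eq_smul hspan hm hmh
      (by rw [hb, LinearMap.smul_apply, Module.End.one_apply]) (c := b⁻¹ * θ) ?_
    rw [mul_smul, ← hbe, inv_smul_smul₀ hb0]

end IsSl2Triple

namespace LieAlgebra.SpecialLinear

variable (R : Type*) [CommRing R]

lemma isSl2Triple_fin_two [Nontrivial R] :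
    IsSl2Triple (singleSubSingle 0 1 (1 : R) : sl (Fin 2) R) (single 0 1 (by decide) 1)
      (single 1 0 (by decide) 1) where
  h_ne_zero h0 := by simpa using congrArg (fun x : sl (Fin 2) R ↦ x.val 0 0) h0
  lie_e_f := by
    ext i j
    fin_cases i <;> fin_cases j <;> simp [Ring.lie_def, Matrix.mul_apply, Matrix.single]
  lie_h_e_nsmul := by
    ext i j
    fin_cases i <;> fin_cases j <;> simp [Ring.lie_def, Matrix.mul_apply, Matrix.single, two_smul]
  lie_h_f_nsmul := by
    ext i j
    fin_cases i <;> fin_cases j <;>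
      simp [Ring.lie_def, Matrix.mul_apply, Matrix.single, two_smul, sub_eq_add_neg]

lemma span_fin_two_eq_top :
    Submodule.span R {(singleSubSingle 0 1 (1 : R) : sl (Fin 2) R), single 0 1 (by decide) 1,
      single 1 0 (by decide) 1} = ⊤ := by
  refine Submodule.eq_top_iff'.mpr fun x ↦ Submodule.mem_span_triple.mpr
    ⟨x.val 0 0, x.val 0 1, x.val 1 0, ?_⟩
  have htr : Matrix.trace x.val = 0 := x.2
  rw [Matrix.trace_fin_two] at htr
  ext i j
  fin_cases i <;> fin_cases j <;> simp [Matrix.single]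
  linear_combination -htr

end LieAlgebra.SpecialLinear

/-- Over an algebraically closed field of characteristic `p > 2`, every finite-dimensional
irreducible representation of `sl₂` has dimension at most `p`. -/
theorem sl2_irreducible_dim_le_char {k : Type*} [Field k] [IsAlgClosed k]
    (p : ℕ) [CharP k p] (hp : p.Prime) (hp2 : 2 < p)
    (V : Type*) [AddCommGroup V] [Module k V] [FiniteDimensional k V]
    [LieRingModule (sl (Fin 2) k) V] [LieModule k (sl (Fin 2) k) V]
    [LieModule.IsIrreducible k (sl (Fin 2) k) V] :
    Module.finrank k V ≤ p :=
  (isSl2Triple_fin_two k).finrank_le_char hp hp2 (span_fin_two_eq_top k)
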